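/- arXiv:2207.13077 — 4 statements merged into one kernel-verified Lean document; each statement's English description precedes it below -/
import Mathlib

section
/- Let k, C, d be positive integers with C ≤ k/2 − 1 and k ≤ d, let F be a finite field, and let S ⊆ F^d be (k, k+C)-subspace evasive. Then |S| ≤ 4k·|F|^{d/⌊k/(2(C+1))⌋}. -/
open Module Finset

section AuxEvasive

lemma evasive_pigeon {V : Type*} [AddCommGroup V] [Fintype V] [DecidableEq V]
    (t : ℕ) (X : Finset V) (hbig : Fintype.card V < X.card.choose t) :
    ∃ A B : Finset V, A ⊆ X ∧ B ⊆ X ∧ Disjoint A B ∧ A.Nonempty ∧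
      A.card = B.card ∧ A.card ≤ t ∧ A.sum id = B.sum id := by
  have hcard : (Finset.univ : Finset V).card < (X.powersetCard t).card := by
    rwa [Finset.card_powersetCard, Finset.card_univ]
  obtain ⟨T, hT, T', hT', hne, hsum⟩ :=
    Finset.exists_ne_map_eq_of_card_lt_of_maps_to hcard
      (fun (a : Finset V) _ => Finset.mem_univ (a.sum id))
  rw [Finset.mem_powersetCard] at hT hT'
  have hc1 := Finset.card_sdiff_add_card_inter T T'
  have hc2 := Finset.card_sdiff_add_card_inter T' T
  rw [Finset.inter_comm T' T] at hc2
  have hcards : (T \ T').card = (T' \ T).card := by omega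
  refine ⟨T \ T', T' \ T, Finset.sdiff_subset.trans hT.1, Finset.sdiff_subset.trans hT'.1,
    disjoint_sdiff_sdiff, ?_, hcards, ?_, ?_⟩
  · rw [Finset.sdiff_nonempty]
    intro hsub
    exact hne (Finset.eq_of_subset_of_card_le hsub (by omega))
  · calc (T \ T').card ≤ T.card := Finset.card_le_card Finset.sdiff_subset
      _ = t := hT.2
  · have h1 : (T \ T').sum id + (T ∩ T').sum id = T.sum id := by
      rw [add_comm]; exact Finset.sum_inter_add_sum_sdiff T T' id
    have h2 : (T' \ T).sum id + (T' ∩ T).sum id = T'.sum id := by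
      rw [add_comm]; exact Finset.sum_inter_add_sum_sdiff T' T id
    rw [Finset.inter_comm T' T] at h2
    have := h1.trans (hsum.trans h2.symm)
    exact add_right_cancel this

lemma evasive_clusters {V : Type*} [AddCommGroup V] [Fintype V] [DecidableEq V] (t : ℕ) :
    ∀ (m : ℕ) (X : Finset V),
      (∀ Y : Finset V, Y ⊆ X → X.card ≤ Y.card + 2 * t * m → Fintype.card V < Y.card.choose t) →
      ∃ L : List (Finset V × Finset V), L.length = m ∧
        (∀ p ∈ L, p.1 ∪ p.2 ⊆ X ∧ p.1.Nonempty ∧ p.1.card = p.2.card ∧ p.1.card ≤ t ∧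
          Disjoint p.1 p.2 ∧ p.1.sum id = p.2.sum id) ∧
        L.Pairwise (fun p q => Disjoint (p.1 ∪ p.2) (q.1 ∪ q.2))
  | 0, X, _ => ⟨[], rfl, by simp, List.Pairwise.nil⟩
  | (m+1), X, hbig => by
    obtain ⟨A, B, hA, hB, hAB, hAne, hABcard, hAt, hABsum⟩ :=
      evasive_pigeon t X (hbig X (subset_refl X) (Nat.le_add_right _ _))
    have hBt : B.card ≤ t := hABcard ▸ hAt
    have hXX : X.card ≤ (X \ (A ∪ B)).card + 2 * t := by
      have h1 : (X ∩ (A ∪ B)).card ≤ 2 * t := by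
        calc (X ∩ (A ∪ B)).card ≤ (A ∪ B).card :=
              Finset.card_le_card Finset.inter_subset_right
          _ ≤ A.card + B.card := Finset.card_union_le _ _
          _ ≤ 2 * t := by omega
      have h2 := Finset.card_sdiff_add_card_inter X (A ∪ B)
      omega
    have hstep : ∀ Y : Finset V, Y ⊆ X \ (A ∪ B) → (X \ (A ∪ B)).card ≤ Y.card + 2 * t * m →
        Fintype.card V < Y.card.choose t := by
      intro Y hY hYc
      refine hbig Y (hY.trans Finset.sdiff_subset) ?_
      have : 2 * t * (m + 1) = 2 * t * m + 2 * t := by ring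
      rw [this]
      calc X.card ≤ (X \ (A ∪ B)).card + 2 * t := hXX
        _ ≤ Y.card + (2 * t * m + 2 * t) := by omega
    obtain ⟨L', hlen, hprops, hpair⟩ := evasive_clusters t m (X \ (A ∪ B)) hstep
    refine ⟨(A, B) :: L', by simp [hlen], ?_, ?_⟩
    · rintro p hp
      rcases List.mem_cons.mp hp with rfl | hp
      · exact ⟨Finset.union_subset hA hB, hAne, hABcard, hAt, hAB, hABsum⟩
      · obtain ⟨hsub, h⟩ := hprops p hp
        exact ⟨hsub.trans Finset.sdiff_subset, h⟩
    · refine List.Pairwise.cons ?_ hpair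
      intro q hq
      have hqsub : q.1 ∪ q.2 ⊆ X \ (A ∪ B) := (hprops q hq).1
      rw [Finset.disjoint_left]
      intro a ha haq
      exact (Finset.mem_sdiff.mp (hqsub haq)).2 ha

variable {V : Type*} [DecidableEq V]

def clUnion (L : List (Finset V × Finset V)) : Finset V :=
  L.foldr (fun p acc => (p.1 ∪ p.2) ∪ acc) ∅

lemma clUnion_cons (p : Finset V × Finset V) (L : List (Finset V × Finset V)) :
    clUnion (p :: L) = (p.1 ∪ p.2) ∪ clUnion L := rfl

lemma mem_clUnion {L : List (Finset V × Finset V)} {x : V} :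
    x ∈ clUnion L ↔ ∃ p ∈ L, x ∈ p.1 ∪ p.2 := by
  induction L with
  | nil => simp [clUnion]
  | cons p L ih =>
    rw [clUnion_cons]
    constructor
    · intro hx
      rcases Finset.mem_union.mp hx with h | h
      · exact ⟨p, List.mem_cons_self, h⟩
      · obtain ⟨q, hq, hxq⟩ := ih.mp h
        exact ⟨q, List.mem_cons_of_mem _ hq, hxq⟩
    · rintro ⟨q, hq, hxq⟩
      rcases List.mem_cons.mp hq with rfl | hq
      · exact Finset.mem_union_left _ hxq
      · exact Finset.mem_union_right _ (ih.mpr ⟨q, hq, hxq⟩)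

lemma clUnion_card_le {c : ℕ} {L : List (Finset V × Finset V)}
    (h : ∀ p ∈ L, (p.1 ∪ p.2).card ≤ c) : (clUnion L).card ≤ c * L.length := by
  induction L with
  | nil => simp [clUnion]
  | cons p L ih =>
    have h1 : (clUnion (p :: L)).card ≤ (p.1 ∪ p.2).card + (clUnion L).card := by
      rw [clUnion_cons]; exact Finset.card_union_le _ _
    have h2 := ih (fun q hq => h q (List.mem_cons_of_mem _ hq))
    have h3 := h p (List.mem_cons_self)
    calc (clUnion (p :: L)).card ≤ (p.1 ∪ p.2).card + (clUnion L).card := h1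
      _ ≤ c + c * L.length := by omega
      _ = c * (p :: L).length := by simp [List.length_cons]; ring

lemma evasive_span_reduce {K V : Type*} [Field K] [AddCommGroup V] [Module K V] [DecidableEq V] :
    ∀ (L : List (Finset V × Finset V)),
      (∀ p ∈ L, p.2.Nonempty ∧ Disjoint p.1 p.2 ∧ p.1.sum id = p.2.sum id) →
      L.Pairwise (fun p q => Disjoint (p.1 ∪ p.2) (q.1 ∪ q.2)) →
      ∃ W : Finset V, W ⊆ clUnion L ∧ W.card + L.length ≤ (clUnion L).card ∧
        Submodule.span K ((clUnion L : Finset V) : Set V) ≤ Submodule.span K (W : Set V)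
  | [], _, _ => ⟨∅, by simp [clUnion], by simp [clUnion], by simp [clUnion]⟩
  | (p :: L), hprops, hpair => by
    obtain ⟨W', hW'sub, hW'card, hW'span⟩ := evasive_span_reduce (K := K) L
      (fun q hq => hprops q (List.mem_cons_of_mem _ hq)) hpair.tail
    obtain ⟨hBne, hdisj, hsum⟩ := hprops p (List.mem_cons_self)
    obtain ⟨b, hb⟩ := hBne
    have hbU : b ∈ p.1 ∪ p.2 := Finset.mem_union_right _ hb
    have hdisjU : Disjoint (p.1 ∪ p.2) (clUnion L) := by
      rw [Finset.disjoint_right]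
      intro a ha hap
      obtain ⟨q, hq, haq⟩ := mem_clUnion.mp ha
      have := (List.pairwise_cons.mp hpair).1 q hq
      exact (Finset.disjoint_left.mp this) hap haq
    set W : Finset V := ((p.1 ∪ p.2).erase b) ∪ W' with hW
    have hWsub : W ⊆ clUnion (p :: L) := by
      rw [clUnion_cons]
      exact Finset.union_subset
        ((Finset.erase_subset _ _).trans Finset.subset_union_left)
        (hW'sub.trans Finset.subset_union_right)
    have hcard : W.card + (p :: L).length ≤ (clUnion (p :: L)).card := by
      have h1 : (clUnion (p :: L)).card = (p.1 ∪ p.2).card + (clUnion L).card := by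
        rw [clUnion_cons]; exact Finset.card_union_of_disjoint hdisjU
      have h2 : W.card ≤ ((p.1 ∪ p.2).erase b).card + W'.card := Finset.card_union_le _ _
      have h3 : ((p.1 ∪ p.2).erase b).card = (p.1 ∪ p.2).card - 1 :=
        Finset.card_erase_of_mem hbU
      have h4 : 1 ≤ (p.1 ∪ p.2).card := Finset.card_pos.mpr ⟨b, hbU⟩
      simp only [List.length_cons]
      omega
    refine ⟨W, hWsub, hcard, ?_⟩
    rw [Submodule.span_le]
    intro x hx
    rw [Finset.mem_coe, clUnion_cons, Finset.mem_union] at hx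
    have hW'W : Submodule.span K (W' : Set V) ≤ Submodule.span K (W : Set V) :=
      Submodule.span_mono (by exact_mod_cast Finset.subset_union_right)
    rcases hx with hx | hx
    · by_cases hxb : x = b
      · have hsum2 : p.2.sum id = b + (p.2.erase b).sum id := (Finset.add_sum_erase _ id hb).symm
        have hbeq : b = p.1.sum id - (p.2.erase b).sum id := by
          rw [hsum, hsum2]; abel
        have hb_mem : b ∈ Submodule.span K (W : Set V) := by
          rw [hbeq]
          refine Submodule.sub_mem _ (Submodule.sum_mem _ ?_) (Submodule.sum_mem _ ?_)
          · intro a ha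
            have hab : a ≠ b := fun h => (Finset.disjoint_left.mp hdisj) ha (h ▸ hb)
            exact Submodule.subset_span (by
              exact_mod_cast Finset.mem_union_left _
                (Finset.mem_erase.mpr ⟨hab, Finset.mem_union_left _ ha⟩))
          · intro a ha
            obtain ⟨hab, ha2⟩ := Finset.mem_erase.mp ha
            exact Submodule.subset_span (by
              exact_mod_cast Finset.mem_union_left _
                (Finset.mem_erase.mpr ⟨hab, Finset.mem_union_right _ ha2⟩))
        exact hxb ▸ hb_mem
      · exact Submodule.subset_span (by
          exact_mod_cast Finset.mem_union_left _ (Finset.mem_erase.mpr ⟨hxb, hx⟩))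
    · exact hW'W (hW'span (Submodule.subset_span (by exact_mod_cast hx)))

lemma evasive_vectorSpan_le_span {K V : Type*} [Field K] [AddCommGroup V] [Module K V]
    (s : Set V) : vectorSpan K s ≤ Submodule.span K s := by
  rw [vectorSpan_def, Submodule.span_le]
  rintro x ⟨a, ha, b, hb, rfl⟩
  show a - b ∈ Submodule.span K s
  exact Submodule.sub_mem _ (Submodule.subset_span ha) (Submodule.subset_span hb)

lemma evasive_aug {K V : Type*} [Field K] [AddCommGroup V] [Module K V] [Fintype V]
    [FiniteDimensional K V] (k : ℕ) (hk : k ≤ finrank K V) (S : Set V) :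
    ∀ (j : ℕ) (A : AffineSubspace K V), (A : Set V).Nonempty →
      finrank K A.direction + j = k →
      ∃ W : AffineSubspace K V, finrank K W.direction = k ∧
        min S.ncard ((S ∩ (A : Set V)).ncard + j) ≤ (S ∩ (W : Set V)).ncard := by
  intro j
  induction j with
  | zero =>
    intro A hAne hdim
    exact ⟨A, by omega, by simpa using min_le_right _ _⟩
  | succ j ih =>
    intro A hAne hdim
    obtain ⟨p, hp⟩ := hAne
    -- a helper to extend A by one point s ∉ A
    have key : ∀ s : V, s ∉ A → ∃ W' : AffineSubspace K V, (A : Set V) ⊆ W' ∧ s ∈ W' ∧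
        (W' : Set V).Nonempty ∧ finrank K W'.direction = finrank K A.direction + 1 := by
      intro s hsA
      have hv : s - p ∉ A.direction := by
        intro h
        have := AffineSubspace.vadd_mem_of_mem_direction h hp
        apply hsA
        simpa [vadd_eq_add, sub_add_cancel] using this
      have hvne : s - p ≠ 0 := fun h => hv (h ▸ Submodule.zero_mem _)
      set D' := A.direction ⊔ Submodule.span K {s - p} with hD'
      have hmem : s - p ∈ D' := Submodule.mem_sup_right (Submodule.mem_span_singleton_self _)
      have hlt : A.direction < D' :=
        SetLike.lt_iff_le_and_exists.mpr ⟨le_sup_left, s - p, hmem, hv⟩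
      have hfr : finrank K D' = finrank K A.direction + 1 := by
        have h1 := Submodule.finrank_sup_add_finrank_inf_eq A.direction
          (Submodule.span K {s - p})
        rw [finrank_span_singleton hvne, ← hD'] at h1
        have h2 := Submodule.finrank_lt_finrank_of_lt hlt
        omega
      refine ⟨AffineSubspace.mk' p D', ?_, ?_, ⟨p, AffineSubspace.self_mem_mk' p D'⟩, ?_⟩
      · intro x hx
        exact AffineSubspace.mem_mk'.mpr
          (Submodule.mem_sup_left (AffineSubspace.vsub_mem_direction hx hp))
      · exact AffineSubspace.mem_mk'.mpr hmem
      · rw [AffineSubspace.direction_mk']; exact hfr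
    by_cases hex : ∃ s ∈ S, s ∉ A
    · obtain ⟨s, hsS, hsA⟩ := hex
      obtain ⟨W', hAW, hsW, hW'ne, hW'fr⟩ := key s hsA
      obtain ⟨W, hWk, hWc⟩ := ih W' hW'ne (by omega)
      refine ⟨W, hWk, le_trans ?_ hWc⟩
      have hins : insert s (S ∩ (A : Set V)) ⊆ S ∩ (W' : Set V) := by
        rintro x (rfl | ⟨hx1, hx2⟩)
        · exact ⟨hsS, hsW⟩
        · exact ⟨hx1, hAW hx2⟩
      have hcount : (S ∩ (A : Set V)).ncard + 1 ≤ (S ∩ (W' : Set V)).ncard := by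
        rw [← Set.ncard_insert_of_notMem (fun h => hsA h.2) (Set.toFinite _)]
        exact Set.ncard_le_ncard hins (Set.toFinite _)
      exact min_le_min le_rfl (by omega)
    · push_neg at hex
      have hne_top : A.direction ≠ ⊤ := by
        intro h
        rw [h, finrank_top] at hdim
        omega
      obtain ⟨v, hvA⟩ : ∃ v, v ∉ A.direction := by
        by_contra h
        push_neg at h
        exact hne_top (Submodule.eq_top_iff'.mpr h)
      have hsA : v + p ∉ A := by
        intro h
        exact hvA (by simpa using AffineSubspace.vsub_mem_direction h hp)
      obtain ⟨W', hAW, _, hW'ne, hW'fr⟩ := key (v + p) hsA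
      obtain ⟨W, hWk, hWc⟩ := ih W' hW'ne (by omega)
      refine ⟨W, hWk, le_trans (min_le_left _ _) (le_trans ?_ hWc)⟩
      have hSW : S ∩ (W' : Set V) = S :=
        Set.inter_eq_self_of_subset_left (fun x hx => hAW (hex x hx))
      rw [hSW]
      exact le_min le_rfl (Nat.le_add_right _ _)

end AuxEvasive

/-- If `S ⊆ F^d` is `(k, k+C)`-subspace evasive (every `k`-dimensional affine
subspace contains at most `k + C` elements of `S`) with `C ≤ k/2 - 1`, then
`|S| ≤ 4k·|F|^{d/⌊k/(2(C+1))⌋}`. -/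
theorem stmt1 (k C d : ℕ) (hk : 0 < k) (hC : 0 < C) (hd : 0 < d) (hkd : k ≤ d)
    (hCk : (C : ℝ) ≤ (k : ℝ) / 2 - 1)
    (F : Type) [Field F] [Fintype F]
    (S : Set (Fin d → F))
    (hS : ∀ W : AffineSubspace F (Fin d → F),
      Module.finrank F W.direction = k → (S ∩ (W : Set (Fin d → F))).ncard ≤ k + C) :
    (S.ncard : ℝ) ≤
      4 * (k : ℝ) * (Fintype.card F : ℝ) ^ ((d : ℝ) / ((k / (2 * (C + 1)) : ℕ) : ℝ)) := by
  classical
  by_contra hcon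
  push_neg at hcon
  set q := Fintype.card F with hqdef
  set t := k / (2 * (C + 1)) with htdef
  set x := (q : ℝ) ^ ((d : ℝ) / (t : ℝ)) with hxdef
  -- basic numeric facts
  have h2Ck : 2 * (C + 1) ≤ k := by
    have h : ((2 * (C + 1) : ℕ) : ℝ) ≤ (k : ℝ) := by push_cast; linarith
    exact_mod_cast h
  have ht1 : 1 ≤ t := (Nat.one_le_div_iff (by omega)).mpr h2Ck
  have htk : t ≤ k := Nat.div_le_self _ _
  have h2tC : 2 * t * (C + 1) ≤ k := by
    calc 2 * t * (C + 1) = t * (2 * (C + 1)) := by ring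
      _ ≤ k := Nat.div_mul_le_self k _
  have hq1 : (1 : ℝ) ≤ (q : ℝ) := by
    have : (1 : ℕ) ≤ q := Fintype.card_pos
    exact_mod_cast this
  have hq0 : (0 : ℝ) ≤ (q : ℝ) := by linarith
  have ht0 : ((t : ℝ)) ≠ 0 := by
    have : (1 : ℝ) ≤ (t : ℝ) := by exact_mod_cast ht1
    linarith
  have hx1 : (1 : ℝ) ≤ x := by
    rw [hxdef]
    calc (1 : ℝ) = (q : ℝ) ^ (0 : ℝ) := (Real.rpow_zero _).symm
      _ ≤ (q : ℝ) ^ ((d : ℝ) / (t : ℝ)) := by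
          apply Real.rpow_le_rpow_of_exponent_le hq1
          positivity
  have hx0 : (0 : ℝ) < x := by linarith
  have hxt : x ^ t = (q : ℝ) ^ (d : ℕ) := by
    rw [hxdef, ← Real.rpow_natCast ((q:ℝ) ^ ((d : ℝ) / (t : ℝ))) t, ← Real.rpow_mul hq0,
      div_mul_cancel₀ _ ht0, Real.rpow_natCast]
  have hk1 : (1 : ℝ) ≤ (k : ℝ) := by exact_mod_cast hk
  have hcardV : Fintype.card (Fin d → F) = q ^ d := by
    rw [Fintype.card_fun, Fintype.card_fin]
  -- S as a finset
  have hSfin : S.Finite := Set.toFinite S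
  set Sf := hSfin.toFinset with hSfdef
  have hSfcard : Sf.card = S.ncard := (Set.ncard_eq_toFinset_card S hSfin).symm
  have hSn : k + C + 1 ≤ S.ncard := by
    have h : ((k + C + 1 : ℕ) : ℝ) < (S.ncard : ℝ) := by
      have h1 : ((k + C + 1 : ℕ) : ℝ) ≤ 4 * (k : ℝ) := by push_cast; linarith
      have h2 : 4 * (k : ℝ) ≤ 4 * (k : ℝ) * x := by
        have := mul_le_mul_of_nonneg_left hx1 (by linarith : (0:ℝ) ≤ 4 * (k:ℝ))
        linarith
      linarith
    exact_mod_cast h.le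
  -- the pigeonhole size condition
  have hbig : ∀ Y : Finset (Fin d → F), Y ⊆ Sf → Sf.card ≤ Y.card + 2 * t * (C + 1) →
      Fintype.card (Fin d → F) < Y.card.choose t := by
    intro Y hY hYc
    have hnY : S.ncard ≤ Y.card + k := by omega
    have hYr : (S.ncard : ℝ) ≤ (Y.card : ℝ) + (k : ℝ) := by exact_mod_cast hnY
    have htr : (t : ℝ) ≤ (k : ℝ) := by exact_mod_cast htk
    have hkx : (k : ℝ) ≤ (k : ℝ) * x := by
      have := mul_le_mul_of_nonneg_left hx1 (by linarith : (0:ℝ) ≤ (k:ℝ))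
      linarith
    have htx : (t : ℝ) * x ≤ (k : ℝ) * x := by
      have hx0' : (0:ℝ) ≤ x := by linarith
      exact mul_le_mul_of_nonneg_right htr hx0'
    have hYb : 2 * (t : ℝ) * x ≤ (Y.card : ℝ) + 1 - (t : ℝ) := by linarith
    have htY : t ≤ Y.card + 1 := by
      have : (t : ℝ) ≤ (Y.card : ℝ) + 1 := by linarith
      exact_mod_cast this
    have hm'cast : ((Y.card + 1 - t : ℕ) : ℝ) = (Y.card : ℝ) + 1 - (t : ℝ) := by
      push_cast [Nat.cast_sub htY]
      ring
    -- key: t! * x^t < (Y.card + 1 - t)^t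
    have hfac : ((t.factorial : ℕ) : ℝ) ≤ (t : ℝ) ^ t := by
      exact_mod_cast Nat.factorial_le_pow t
    have h2t : (2 : ℝ) ≤ 2 ^ t := by
      calc (2:ℝ) = 2 ^ 1 := (pow_one 2).symm
        _ ≤ 2 ^ t := pow_le_pow_right₀ one_le_two ht1
    have hxtpos : (0 : ℝ) < x ^ t := pow_pos hx0 t
    have httpos : (0 : ℝ) < (t : ℝ) ^ t := by positivity
    have hchain : ((t.factorial : ℕ) : ℝ) * x ^ t < ((Y.card + 1 - t : ℕ) : ℝ) ^ t := by
      have e1 : ((t.factorial : ℕ) : ℝ) * x ^ t ≤ (t : ℝ) ^ t * x ^ t :=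
        mul_le_mul_of_nonneg_right hfac hxtpos.le
      have e2 : (t : ℝ) ^ t * x ^ t < 2 ^ t * ((t : ℝ) ^ t * x ^ t) := by
        have hpos : (0:ℝ) < (t : ℝ) ^ t * x ^ t := by positivity
        have := mul_lt_mul_of_pos_right (by linarith : (1:ℝ) < 2 ^ t) hpos
        linarith
      have e3 : (2 : ℝ) ^ t * ((t : ℝ) ^ t * x ^ t) = (2 * (t : ℝ) * x) ^ t := by
        rw [mul_pow, mul_pow]; ring
      have e4 : (2 * (t : ℝ) * x) ^ t ≤ ((Y.card : ℝ) + 1 - (t : ℝ)) ^ t := by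
        apply pow_le_pow_left₀ (by positivity) hYb
      rw [hm'cast]
      linarith
    have hfacpos : (0 : ℝ) < ((t.factorial : ℕ) : ℝ) := by
      exact_mod_cast t.factorial_pos
    have hkey : ((Fintype.card (Fin d → F) : ℕ) : ℝ) < (Y.card.choose t : ℝ) := by
      have hc1 : ((Fintype.card (Fin d → F) : ℕ) : ℝ) = x ^ t := by
        rw [hcardV, hxt]; push_cast; ring
      have hc2 : x ^ t < ((Y.card + 1 - t : ℕ) : ℝ) ^ t / ((t.factorial : ℕ) : ℝ) := by
        rw [lt_div_iff₀ hfacpos]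
        calc x ^ t * ((t.factorial : ℕ) : ℝ) = ((t.factorial : ℕ) : ℝ) * x ^ t := by ring
          _ < _ := hchain
      have hc3 := Nat.pow_le_choose (α := ℝ) t Y.card
      rw [hc1]
      calc x ^ t < ((Y.card + 1 - t : ℕ) : ℝ) ^ t / ((t.factorial : ℕ) : ℝ) := hc2
        _ ≤ (Y.card.choose t : ℝ) := by exact_mod_cast hc3
    exact_mod_cast hkey
  -- extract C+1 disjoint clusters
  obtain ⟨L, hLlen, hLprops, hLpair⟩ := evasive_clusters t (C + 1) Sf hbig
  set U := clUnion L with hUdef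
  have hUS : ∀ x ∈ U, x ∈ S := by
    intro x hx
    obtain ⟨p, hp, hxp⟩ := mem_clUnion.mp hx
    exact (Set.Finite.mem_toFinset hSfin).mp ((hLprops p hp).1 hxp)
  have hUk : U.card ≤ k := by
    have h1 : ∀ p ∈ L, (p.1 ∪ p.2).card ≤ 2 * t := by
      intro p hp
      obtain ⟨_, _, hcard, hle, _, _⟩ := hLprops p hp
      calc (p.1 ∪ p.2).card ≤ p.1.card + p.2.card := Finset.card_union_le _ _
        _ ≤ 2 * t := by omega
    calc U.card ≤ 2 * t * L.length := clUnion_card_le h1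
      _ = 2 * t * (C + 1) := by rw [hLlen]
      _ ≤ k := h2tC
  have hUne : U.Nonempty := by
    cases L with
    | nil => simp at hLlen
    | cons p L' =>
      obtain ⟨_, hpne, _⟩ := hLprops p (List.mem_cons_self)
      obtain ⟨a, ha⟩ := hpne
      exact ⟨a, mem_clUnion.mpr ⟨p, List.mem_cons_self, Finset.mem_union_left _ ha⟩⟩
  -- span reduction: a subset W of U, smaller by C+1, spanning everything
  obtain ⟨W, hWU, hWcard, hWspan⟩ := evasive_span_reduce (K := F) L
    (fun p hp => by
      obtain ⟨hsub, hne, hcard, hle, hdisj, hsum⟩ := hLprops p hp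
      exact ⟨Finset.card_pos.mp (hcard ▸ Finset.card_pos.mpr hne), hdisj, hsum⟩) hLpair
  rw [← hUdef] at hWcard hWspan hWU
  rw [hLlen] at hWcard
  set A₀ := affineSpan F ((U : Set (Fin d → F))) with hA₀def
  set δ := finrank F A₀.direction with hδdef
  have hδW : δ ≤ W.card := by
    have h1 : A₀.direction ≤ Submodule.span F ((W : Set (Fin d → F))) := by
      rw [hA₀def, direction_affineSpan]
      exact le_trans (evasive_vectorSpan_le_span _) hWspan
    calc δ ≤ finrank F (Submodule.span F ((W : Set (Fin d → F)))) := Submodule.finrank_mono h1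
      _ ≤ W.card := by simpa [Set.finrank] using finrank_span_finset_le_card (R := F) W
  have hδk : δ + (C + 1) ≤ U.card := by omega
  have hA₀ne : ((A₀ : Set (Fin d → F))).Nonempty :=
    (affineSpan_nonempty F).mpr (Finset.coe_nonempty.mpr hUne)
  have hfinV : finrank F (Fin d → F) = d := by rw [Module.finrank_pi, Fintype.card_fin]
  obtain ⟨W2, hW2k, hW2c⟩ := evasive_aug k (by rw [hfinV]; exact hkd) S (k - δ) A₀ hA₀ne
    (by omega)
  have hUA : ((U : Set (Fin d → F))) ⊆ S ∩ (A₀ : Set (Fin d → F)) := by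
    intro y hy
    exact ⟨hUS y hy, subset_affineSpan F _ hy⟩
  have hUc : U.card ≤ (S ∩ (A₀ : Set (Fin d → F))).ncard := by
    rw [← Set.ncard_coe_finset U]
    exact Set.ncard_le_ncard hUA (Set.toFinite _)
  have hfinal := hS W2 hW2k
  have hmin : k + C + 1 ≤ min S.ncard ((S ∩ (A₀ : Set (Fin d → F))).ncard + (k - δ)) := by
    refine le_min hSn ?_
    omega
  omega
end

section
/- Let F be a finite field, let k, D, s be positive integers with s ≤ D and s ≤ |F|^{1/2}, and let Q_D denote the set of polynomials in F[x₁,…,x_k] of total degree at most D. Let q₁,…,q_k be chosen independently and uniformly at random from Q_D, and let N = |{z ∈ F^k : q₁(z) = ⋯ = q_k(z) = 0}|. Then E[N^s] ≤ s^{s+1}. -/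
open MvPolynomial Finset

/-- Multivariate interpolation: a polynomial of low degree that is `1` at `a ∈ T` and `0`
elsewhere on `T`. -/
lemma stmt13_interp {F : Type} [Field F] (k D : ℕ) (hk : 0 < k)
    (T : Finset (Fin k → F)) (hT : T.card ≤ D + 1)
    (a : Fin k → F) (ha : a ∈ T) :
    ∃ p : MvPolynomial (Fin k) F, p.totalDegree ≤ D ∧ eval a p = 1 ∧
      ∀ b ∈ T, b ≠ a → eval b p = 0 := by
  classical
  set g : (Fin k → F) → Fin k :=
    fun b => if h : ∃ i, a i ≠ b i then h.choose else ⟨0, hk⟩ with hgdef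
  have hg : ∀ b : Fin k → F, b ≠ a → a (g b) ≠ b (g b) := by
    intro b hb
    have h : ∃ i, a i ≠ b i := by
      by_contra h
      push_neg at h
      exact hb (funext fun i => (h i).symm)
    simpa only [hgdef, dif_pos h] using h.choose_spec
  refine ⟨∏ b ∈ T.erase a, (C ((a (g b) - b (g b))⁻¹) * (X (g b) - C (b (g b)))), ?_, ?_, ?_⟩
  · refine (totalDegree_finset_prod _ _).trans ?_
    have h1 : ∀ b ∈ T.erase a,
        (C ((a (g b) - b (g b))⁻¹) * (X (g b) - C (b (g b)))).totalDegree ≤ 1 := by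
      intro b _
      refine (totalDegree_mul _ _).trans ?_
      have hx : (X (g b) - C (b (g b)) : MvPolynomial (Fin k) F).totalDegree ≤ 1 := by
        rw [sub_eq_add_neg]
        refine (totalDegree_add _ _).trans ?_
        simp [totalDegree_X]
      simpa [totalDegree_C] using hx
    refine (Finset.sum_le_card_nsmul _ _ 1 h1).trans ?_
    rw [Finset.card_erase_of_mem ha]
    simp only [smul_eq_mul, mul_one]
    omega
  · rw [map_prod]
    refine Finset.prod_eq_one fun b hb => ?_
    have hb' : b ≠ a := (Finset.mem_erase.mp hb).1
    have hne : a (g b) - b (g b) ≠ 0 := sub_ne_zero.mpr (hg b hb')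
    simp [inv_mul_cancel₀ hne]
  · intro b hbT hba
    rw [map_prod]
    refine Finset.prod_eq_zero (Finset.mem_erase.mpr ⟨hba, hbT⟩) ?_
    simp

lemma stmt13_card {F : Type} [Field F] [Fintype F] (k D : ℕ) (hk : 0 < k)
    (T : Finset (Fin k → F)) (hT : T.card ≤ D + 1) :
    Nat.card {p : MvPolynomial (Fin k) F // p.totalDegree ≤ D ∧ ∀ b ∈ T, eval b p = 0}
      * Fintype.card F ^ T.card
    = Nat.card {p : MvPolynomial (Fin k) F // p.totalDegree ≤ D} := by
  classical
  set V := restrictTotalDegree (Fin k) F D with hV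
  haveI : Finite V := Module.finite_of_finite F
  let L : V →ₗ[F] ({x // x ∈ T} → F) :=
    { toFun := fun p b => eval (b : Fin k → F) (p : MvPolynomial (Fin k) F)
      map_add' := by intro p q; funext b; simp
      map_smul' := by intro c p; funext b; simp }
  have hsurj : Function.Surjective L := by
    intro v
    choose P hPdeg hP1 hP0 using fun b : T => stmt13_interp k D hk T hT b b.2
    refine ⟨⟨∑ b : T, C (v b) * P b, ?_⟩, ?_⟩
    · rw [mem_restrictTotalDegree]
      refine totalDegree_finsetSum_le fun b _ => ?_
      exact (totalDegree_mul _ _).trans (by simpa [totalDegree_C] using hPdeg b)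
    · funext b
      show eval (b : Fin k → F) (∑ b' : T, C (v b') * P b') = v b
      rw [map_sum]
      rw [Finset.sum_eq_single b]
      · simp [hP1 b]
      · intro b' _ hne
        rw [eval_mul, hP0 b' b b.2 (fun h => hne (Subtype.ext h.symm)), mul_zero]
      · simp
  let φ := L.toAddMonoidHom
  have hker : ∀ x : V, x ∈ φ.ker ↔ ∀ b ∈ T, eval b (x : MvPolynomial (Fin k) F) = 0 := by
    intro x
    rw [AddMonoidHom.mem_ker]
    constructor
    · intro h b hb
      exact congrFun h ⟨b, hb⟩
    · intro h
      funext b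
      exact h b b.2
  have e1 : {p : MvPolynomial (Fin k) F // p.totalDegree ≤ D ∧ ∀ b ∈ T, eval b p = 0} ≃ φ.ker :=
    { toFun := fun p => ⟨⟨p.1, (mem_restrictTotalDegree _ _ _).2 p.2.1⟩, (hker _).2 p.2.2⟩
      invFun := fun x => ⟨(x.1 : MvPolynomial (Fin k) F),
        (mem_restrictTotalDegree _ _ _).1 x.1.2, (hker x.1).1 x.2⟩
      left_inv := fun p => rfl
      right_inv := fun x => rfl }
  have e2 : {p : MvPolynomial (Fin k) F // p.totalDegree ≤ D} ≃ V :=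
    (Equiv.subtypeEquivRight (fun p => (mem_restrictTotalDegree (m := D) (σ := Fin k) (R := F) p).symm))
  have hq : Nat.card (V ⧸ φ.ker) = Fintype.card F ^ T.card := by
    rw [Nat.card_congr (QuotientAddGroup.quotientKerEquivOfSurjective φ hsurj).toEquiv]
    rw [Nat.card_fun]
    simp [Nat.card_eq_fintype_card, Nat.card_eq_finsetCard]
  calc Nat.card {p : MvPolynomial (Fin k) F // p.totalDegree ≤ D ∧ ∀ b ∈ T, eval b p = 0}
        * Fintype.card F ^ T.card
      = Nat.card φ.ker * Nat.card (V ⧸ φ.ker) := by rw [Nat.card_congr e1, hq]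
    _ = Nat.card (V ⧸ φ.ker) * Nat.card φ.ker := Nat.mul_comm _ _
    _ = Nat.card V := (AddSubgroup.card_eq_card_quotient_mul_card_addSubgroup φ.ker).symm
    _ = Nat.card {p : MvPolynomial (Fin k) F // p.totalDegree ≤ D} := (Nat.card_congr e2).symm

/-- For `q₁,…,q_k` independent uniform on `Q_D`, with
`N = |{z ∈ F^k : q₁(z) = ⋯ = q_k(z) = 0}|`, one has `E[N^s] ≤ s^{s+1}` whenever `s ≤ D` and
`s ≤ |F|^{1/2}`. Equivalently (multiplying by `|Q_D|^k` and expanding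
`N(q)^s = #{(z₁,…,z_s) : ∀ i j, qᵢ(z_j) = 0}`, then swapping the order of summation):
`∑_{z : Fin s → F^k} #{q ∈ Q_D^k : ∀ i j, qᵢ(z_j) = 0} ≤ s^{s+1}·|Q_D|^k`. -/
theorem stmt13 (F : Type) [Field F] [Fintype F] (k D s : ℕ)
    (hk : 0 < k) (hD : 0 < D) (hs : 0 < s) (hsD : s ≤ D)
    (hsF : (s : ℝ) ≤ Real.sqrt (Fintype.card F)) :
    ∑ z : Fin s → Fin k → F,
      Nat.card {q : Fin k → MvPolynomial (Fin k) F //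
        (∀ i, (q i).totalDegree ≤ D) ∧ ∀ i j, MvPolynomial.eval (z j) (q i) = 0}
      ≤ s ^ (s + 1) * Nat.card {p : MvPolynomial (Fin k) F // p.totalDegree ≤ D} ^ k := by
  classical
  haveI : Nonempty (Fin s) := ⟨⟨0, hs⟩⟩
  set n : Finset (Fin k → F) → ℕ := fun T =>
    Nat.card {p : MvPolynomial (Fin k) F // p.totalDegree ≤ D ∧
      ∀ b ∈ T, MvPolynomial.eval b p = 0} with hn
  set M : ℕ := Nat.card {p : MvPolynomial (Fin k) F // p.totalDegree ≤ D} with hM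
  set Q : ℝ := (Fintype.card F : ℝ) with hQ
  have hq0 : (0:ℝ) < Q := by
    rw [hQ]; exact_mod_cast Fintype.card_pos
  -- Step A : factor the count over the k coordinates
  have hA : ∀ z : Fin s → Fin k → F,
      Nat.card {qq : Fin k → MvPolynomial (Fin k) F //
        (∀ i, (qq i).totalDegree ≤ D) ∧ ∀ i j, MvPolynomial.eval (z j) (qq i) = 0}
      = n (Finset.image z Finset.univ) ^ k := by
    intro z
    have e : {qq : Fin k → MvPolynomial (Fin k) F //
        (∀ i, (qq i).totalDegree ≤ D) ∧ ∀ i j, MvPolynomial.eval (z j) (qq i) = 0}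
        ≃ ∀ _i : Fin k, {p : MvPolynomial (Fin k) F // p.totalDegree ≤ D ∧
            ∀ b ∈ Finset.image z Finset.univ, MvPolynomial.eval b p = 0} := by
      refine (Equiv.subtypeEquivRight ?_).trans Equiv.subtypePiEquivPi
      intro qq
      constructor
      · rintro ⟨h1, h2⟩ i
        refine ⟨h1 i, fun b hb => ?_⟩
        obtain ⟨j, _, rfl⟩ := Finset.mem_image.mp hb
        exact h2 i j
      · intro h
        exact ⟨fun i => (h i).1,
          fun i j => (h i).2 (z j) (Finset.mem_image_of_mem z (Finset.mem_univ j))⟩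
    rw [Nat.card_congr e, Nat.card_pi, Finset.prod_const, Finset.card_univ,
      Fintype.card_fin]
  have hcard : ∀ z : Fin s → Fin k → F, (Finset.image z Finset.univ).card ≤ s := fun z =>
    Finset.card_image_le.trans (by simp)
  -- Step B : exact value of `n T` for images
  have hB : ∀ z : Fin s → Fin k → F,
      (n (Finset.image z Finset.univ) : ℝ) ^ k
        = (M:ℝ)^k / Q ^ (k * (Finset.image z Finset.univ).card) := by
    intro z
    have h := stmt13_card k D hk (Finset.image z Finset.univ)
      (by have := hcard z; omega)
    have h2 : (n (Finset.image z Finset.univ) : ℝ)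
        * Q ^ (Finset.image z Finset.univ).card = (M:ℝ) := by
      rw [hQ]; exact_mod_cast congrArg (fun x : ℕ => (x : ℝ)) h
    have h3 : (n (Finset.image z Finset.univ) : ℝ)
        = (M:ℝ) / Q ^ (Finset.image z Finset.univ).card := by
      rw [eq_div_iff (by positivity)]; exact h2
    rw [h3, div_pow, ← pow_mul, Nat.mul_comm]
  -- rewrite the goal sum
  rw [Finset.sum_congr rfl fun z _ => hA z]
  rw [← Nat.cast_le (α := ℝ)]
  push_cast
  rw [show (∑ z : Fin s → Fin k → F, (n (Finset.image z Finset.univ) : ℝ) ^ k)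
      = ∑ z : Fin s → Fin k → F, (M:ℝ)^k / Q ^ (k * (Finset.image z Finset.univ).card)
    from Finset.sum_congr rfl fun z _ => hB z]
  -- fiberwise over the image
  set tgt : Finset (Finset (Fin k → F)) :=
    Finset.univ.filter (fun T => T.Nonempty ∧ T.card ≤ s) with htgt
  have hmaps : ∀ z ∈ (Finset.univ : Finset (Fin s → Fin k → F)),
      Finset.image z Finset.univ ∈ tgt := by
    intro z _
    rw [htgt, Finset.mem_filter]
    exact ⟨Finset.mem_univ _, Finset.image_nonempty.mpr Finset.univ_nonempty, hcard z⟩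
  rw [← Finset.sum_fiberwise_of_maps_to hmaps
    (fun z => (M:ℝ)^k / Q ^ (k * (Finset.image z Finset.univ).card))]
  -- collapse each fiber
  have hfibval : ∀ T ∈ tgt,
      (∑ z ∈ Finset.univ.filter (fun z : Fin s → Fin k → F => Finset.image z Finset.univ = T),
        (M:ℝ)^k / Q ^ (k * (Finset.image z Finset.univ).card))
      = ((Finset.univ.filter
            (fun z : Fin s → Fin k → F => Finset.image z Finset.univ = T)).card : ℝ)
          * ((M:ℝ)^k / Q ^ (k * T.card)) := by
    intro T _
    rw [Finset.sum_congr rfl (fun z hz => by rw [(Finset.mem_filter.mp hz).2]),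
      Finset.sum_const, nsmul_eq_mul]
  rw [Finset.sum_congr rfl hfibval]
  -- bound fiber sizes
  have hfibcard : ∀ T ∈ tgt,
      ((Finset.univ.filter
          (fun z : Fin s → Fin k → F => Finset.image z Finset.univ = T)).card : ℝ)
        ≤ (s:ℝ) ^ s := by
    intro T hT
    have hTs : T.card ≤ s := ((Finset.mem_filter.mp hT).2).2
    have hsub : (Finset.univ.filter
          (fun z : Fin s → Fin k → F => Finset.image z Finset.univ = T))
        ⊆ Fintype.piFinset (fun _ : Fin s => T) := by
      intro z hz
      rw [Fintype.mem_piFinset]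
      intro j
      rw [← (Finset.mem_filter.mp hz).2]
      exact Finset.mem_image_of_mem z (Finset.mem_univ j)
    have h1 : (Finset.univ.filter
          (fun z : Fin s → Fin k → F => Finset.image z Finset.univ = T)).card
        ≤ T.card ^ s := by
      refine (Finset.card_le_card hsub).trans ?_
      rw [Fintype.card_piFinset]
      simp
    exact_mod_cast h1.trans (Nat.pow_le_pow_left hTs s)
  -- sum of the geometric weights is at most `s`
  have hweight : (∑ T ∈ tgt, 1 / Q ^ (k * T.card)) ≤ (s : ℝ) := by
    have hmaps2 : ∀ T ∈ tgt, T.card ∈ Finset.Icc 1 s := by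
      intro T hT
      rw [Finset.mem_Icc]
      have h := (Finset.mem_filter.mp hT).2
      exact ⟨h.1.card_pos, h.2⟩
    rw [← Finset.sum_fiberwise_of_maps_to hmaps2 (fun T => 1 / Q ^ (k * T.card))]
    have hterm : ∀ t ∈ Finset.Icc 1 s,
        (∑ T ∈ tgt.filter (fun T => T.card = t), 1 / Q ^ (k * T.card)) ≤ 1 := by
      intro t _
      rw [Finset.sum_congr rfl (fun T hT => by rw [(Finset.mem_filter.mp hT).2]),
        Finset.sum_const, nsmul_eq_mul]
      have hsub : tgt.filter (fun T => T.card = t)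
          ⊆ Finset.powersetCard t (Finset.univ : Finset (Fin k → F)) := by
        intro T hT
        rw [Finset.mem_powersetCard]
        exact ⟨Finset.subset_univ _, (Finset.mem_filter.mp hT).2⟩
      have hc : ((tgt.filter (fun T => T.card = t)).card : ℝ)
          ≤ Q ^ (k * t) := by
        have h1 : (tgt.filter (fun T => T.card = t)).card
            ≤ (Fintype.card (Fin k → F)) ^ t := by
          refine (Finset.card_le_card hsub).trans ?_
          rw [Finset.card_powersetCard, Finset.card_univ]
          exact Nat.choose_le_pow _ _
        have h3 : (((Fintype.card (Fin k → F)) ^ t : ℕ) : ℝ) = Q ^ (k * t) := by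
          rw [hQ, Fintype.card_fun, Fintype.card_fin]
          push_cast
          rw [← pow_mul]
        calc ((tgt.filter (fun T => T.card = t)).card : ℝ)
            ≤ (((Fintype.card (Fin k → F)) ^ t : ℕ) : ℝ) := by exact_mod_cast h1
          _ = Q ^ (k * t) := h3
      calc ((tgt.filter (fun T => T.card = t)).card : ℝ) * (1 / Q ^ (k * t))
          ≤ Q ^ (k * t) * (1 / Q ^ (k * t)) := by
            apply mul_le_mul_of_nonneg_right hc
            positivity
        _ = 1 := by field_simp
    calc (∑ t ∈ Finset.Icc 1 s, ∑ T ∈ tgt.filter (fun T => T.card = t),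
            1 / Q ^ (k * T.card))
        ≤ ∑ t ∈ Finset.Icc 1 s, (1:ℝ) := Finset.sum_le_sum hterm
      _ = (s:ℝ) := by simp
  -- put everything together
  calc (∑ T ∈ tgt, ((Finset.univ.filter
          (fun z : Fin s → Fin k → F => Finset.image z Finset.univ = T)).card : ℝ)
        * ((M:ℝ)^k / Q ^ (k * T.card)))
      ≤ ∑ T ∈ tgt, (s:ℝ)^s * ((M:ℝ)^k / Q ^ (k * T.card)) := by
        refine Finset.sum_le_sum fun T hT => ?_
        exact mul_le_mul_of_nonneg_right (hfibcard T hT) (by positivity)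
    _ = (s:ℝ)^s * (M:ℝ)^k * (∑ T ∈ tgt, 1 / Q ^ (k * T.card)) := by
        rw [Finset.mul_sum]
        refine Finset.sum_congr rfl fun T _ => ?_
        ring
    _ ≤ (s:ℝ)^s * (M:ℝ)^k * (s:ℝ) := by
        refine mul_le_mul_of_nonneg_left hweight ?_
        positivity
    _ = (s:ℝ)^(s+1) * (M:ℝ)^k := by ring
end

section
/- Let d and n be positive integers, let p be a prime with p ≤ n^{d/(d−1)}, and let x ∈ F_p^d be a nonzero vector. Then there exists y ∈ F_p^d with x ∼ y (i.e., x = λy for some nonzero λ ∈ F_p) such that every coordinate y(i), i ∈ {1,…,d}, is the reduction modulo p of some integer in the interval [−n, n]. -/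
/-- For a prime `p ≤ n^{d/(d-1)}` and a nonzero `x ∈ F_p^d`, there is
`y ∈ F_p^d` with `x ∼ y` (i.e. `x = λ·y` for some nonzero `λ ∈ F_p`) such that every
coordinate of `y` is the reduction mod `p` of an integer in `[-n, n]`. -/
theorem stmt15 (d n : ℕ) (hd : 0 < d) (hn : 0 < n) (p : ℕ) (hp : p.Prime)
    (hpn : (p : ℝ) ≤ (n : ℝ) ^ ((d : ℝ) / ((d : ℝ) - 1)))
    (x : Fin d → ZMod p) (hx : x ≠ 0) :
    ∃ y : Fin d → ZMod p,
      (∃ l : ZMod p, l ≠ 0 ∧ x = l • y) ∧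
      ∀ i, ∃ m : ℤ, -(n : ℤ) ≤ m ∧ m ≤ (n : ℤ) ∧ y i = (m : ZMod p) := by
  haveI : Fact p.Prime := ⟨hp⟩
  -- d ≥ 2
  have hd2 : 2 ≤ d := by
    by_contra h
    have hd1 : d = 1 := by omega
    subst hd1
    simp only [Nat.cast_one, sub_self, div_zero, Real.rpow_zero] at hpn
    have h2 : (2:ℝ) ≤ (p:ℝ) := by exact_mod_cast hp.two_le
    linarith
  have hdR : ((d:ℝ) - 1) ≠ 0 := by
    have : (2:ℝ) ≤ (d:ℝ) := by exact_mod_cast hd2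
    linarith
  -- p^(d-1) ≤ n^d in ℕ
  have hnat : p ^ (d - 1) ≤ n ^ d := by
    have h1 : (p:ℝ) ^ ((d:ℝ) - 1) ≤ ((n:ℝ) ^ ((d:ℝ) / ((d:ℝ) - 1))) ^ ((d:ℝ) - 1) := by
      apply Real.rpow_le_rpow (by positivity) hpn
      have : (2:ℝ) ≤ (d:ℝ) := by exact_mod_cast hd2
      linarith
    rw [← Real.rpow_mul (by positivity), div_mul_cancel₀ _ hdR] at h1
    have hc : ((d - 1 : ℕ) : ℝ) = (d:ℝ) - 1 := by
      have : 1 ≤ d := le_trans one_le_two hd2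
      push_cast [this]; ring
    have h2 : (p:ℝ) ^ (d - 1 : ℕ) ≤ (n:ℝ) ^ (d : ℕ) := by
      rw [← Real.rpow_natCast (p:ℝ), ← Real.rpow_natCast (n:ℝ), hc]
      exact h1
    exact_mod_cast h2
  set k := min n (p - 1) with hk
  have hkey : p ^ (d - 1) < (k + 1) ^ d := by
    rcases le_total n (p - 1) with h | h
    · have : k = n := min_eq_left h
      rw [this]
      exact lt_of_le_of_lt hnat (Nat.pow_lt_pow_left (Nat.lt_succ_self n) hd.ne')
    · have : k = p - 1 := min_eq_right h
      rw [this, Nat.sub_add_cancel hp.one_lt.le]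
      exact Nat.pow_lt_pow_right hp.one_lt (Nat.sub_lt hd one_pos)
  -- pigeonhole
  have hcard : Fintype.card (Fin d → ZMod p) <
      Fintype.card ((ZMod p) × (Fin d → Fin (k + 1))) := by
    rw [Fintype.card_prod, Fintype.card_fun, Fintype.card_fun, ZMod.card, Fintype.card_fin,
      Fintype.card_fin]
    calc p ^ d = p * p ^ (d - 1) := by
          rw [← pow_succ']
          congr 1
          omega
      _ < p * (k + 1) ^ d := by
          exact mul_lt_mul_of_pos_left hkey hp.pos
  obtain ⟨a, b, hab, hfab⟩ := Fintype.exists_ne_map_eq_of_card_lt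
    (fun z : (ZMod p) × (Fin d → Fin (k + 1)) => fun i => z.1 * x i + ((z.2 i : ℕ) : ZMod p))
    hcard
  have hkp : k + 1 ≤ p := by
    have := hp.pos
    omega
  have heq : ∀ i, a.1 * x i + ((a.2 i : ℕ) : ZMod p) = b.1 * x i + ((b.2 i : ℕ) : ZMod p) :=
    fun i => congrFun hfab i
  have hl : a.1 ≠ b.1 := by
    intro h
    apply hab
    have h2 : a.2 = b.2 := by
      funext i
      have h0 := heq i
      rw [h] at h0
      have this := add_left_cancel h0
      have hv : ((a.2 i : ℕ) : ZMod p).val = ((b.2 i : ℕ) : ZMod p).val := by rw [this]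
      rw [ZMod.val_cast_of_lt (lt_of_lt_of_le (a.2 i).2 hkp),
        ZMod.val_cast_of_lt (lt_of_lt_of_le (b.2 i).2 hkp)] at hv
      exact Fin.ext hv
    exact Prod.ext h h2
  set lam := a.1 - b.1 with hlam
  have hlam0 : lam ≠ 0 := sub_ne_zero_of_ne hl
  refine ⟨fun i => lam * x i, ⟨lam⁻¹, inv_ne_zero hlam0, ?_⟩, ?_⟩
  · funext i
    simp only [Pi.smul_apply, smul_eq_mul, ← mul_assoc, inv_mul_cancel₀ hlam0, one_mul]
  · intro i
    refine ⟨(b.2 i : ℤ) - (a.2 i : ℤ), ?_, ?_, ?_⟩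
    · have h1 : (a.2 i : ℤ) ≤ k := by exact_mod_cast Nat.lt_succ_iff.mp (a.2 i).2
      have h2 : (0:ℤ) ≤ (b.2 i : ℤ) := Int.ofNat_nonneg _
      have hkn : (k:ℤ) ≤ n := by exact_mod_cast min_le_left n (p-1)
      omega
    · have h1 : (b.2 i : ℤ) ≤ k := by exact_mod_cast (Nat.lt_succ_iff.mp (b.2 i).2)
      have h2 : (0:ℤ) ≤ (a.2 i : ℤ) := Int.ofNat_nonneg _
      have hkn : (k:ℤ) ≤ n := by exact_mod_cast min_le_left n (p-1)
      omega
    · have := heq i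
      push_cast
      have : lam * x i = ((b.2 i : ℕ) : ZMod p) - ((a.2 i : ℕ) : ZMod p) := by
        rw [hlam, sub_mul]
        linear_combination heq i
      rw [this]
end

section
/- Let p be a prime and let k ≤ d be positive integers. Let S ⊆ ℤ^d be a finite set of integer vectors such that every x ∈ S has nonzero reduction modulo p, and such that for any two distinct x, y ∈ S the reductions of x and y modulo p are not proportional over F_p (there is no λ ∈ F_p with x ≡ λy (mod p)). Then every k-dimensional linear subspace of ℝ^d contains at most (p^k − 1)/(p − 1) elements of S. -/
/-- If integer vectors have linearly independent reductions mod a prime `p`, then any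
integer linear relation among them is trivial. -/
private lemma int_rel_zero {p d : ℕ} (hp : p.Prime) {ι : Type*} [Fintype ι]
    {x : ι → Fin d → ℤ}
    (h : LinearIndependent (ZMod p) (fun j => (fun i => ((x j i : ZMod p))))) :
    ∀ c : ι → ℤ, (∀ i, ∑ j, c j * x j i = 0) → ∀ j, c j = 0 := by
  haveI : Fact p.Prime := ⟨hp⟩
  have L1 : ∀ c : ι → ℤ, (∀ i, ∑ j, c j * x j i = 0) → ∀ j, (p : ℤ) ∣ c j := by
    intro c hc j
    have h2 := Fintype.linearIndependent_iff.mp h (fun j => (c j : ZMod p)) ?_ j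
    · exact_mod_cast (ZMod.intCast_zmod_eq_zero_iff_dvd _ p).mp h2
    · funext i
      have := congrArg (fun z : ℤ => (z : ZMod p)) (hc i)
      push_cast at this
      simpa [Finset.sum_apply] using this
  suffices H : ∀ n (c : ι → ℤ), (∑ j, (c j).natAbs) = n →
      (∀ i, ∑ j, c j * x j i = 0) → ∀ j, c j = 0 by
    intro c hc; exact H _ c rfl hc
  intro n
  induction n using Nat.strong_induction_on with
  | _ n IH =>
    intro c hsum hc
    by_contra hne
    push_neg at hne
    obtain ⟨j0, hj0⟩ := hne
    have hdvd := L1 c hc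
    set c' : ι → ℤ := fun j => c j / p with hc'
    have hcc : ∀ j, c j = p * c' j := fun j => (Int.mul_ediv_cancel' (hdvd j)).symm
    have hp0 : (p : ℤ) ≠ 0 := by exact_mod_cast hp.ne_zero
    have hrel : ∀ i, ∑ j, c' j * x j i = 0 := by
      intro i
      have hmul : (p : ℤ) * ∑ j, c' j * x j i = 0 := by
        rw [Finset.mul_sum, ← hc i]
        refine Finset.sum_congr rfl fun j _ => ?_
        rw [hcc j]; ring
      exact (mul_eq_zero.mp hmul).resolve_left hp0
    have hc'0 : c' j0 ≠ 0 := by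
      intro hz
      exact hj0 (by rw [hcc j0, hz, mul_zero])
    have hlt : ∑ j, (c' j).natAbs < n := by
      rw [← hsum]
      refine Finset.sum_lt_sum (fun j _ => ?_) ⟨j0, Finset.mem_univ _, ?_⟩
      · rw [hcc j, Int.natAbs_mul]
        exact Nat.le_mul_of_pos_left _ (by simpa using hp.pos)
      · rw [hcc j0, Int.natAbs_mul]
        have h1 : 0 < (c' j0).natAbs := Int.natAbs_pos.mpr hc'0
        have h2 : 2 ≤ (p : ℤ).natAbs := by simpa using hp.two_le
        nlinarith
    have := IH _ hlt c' rfl hrel j0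
    exact hj0 (by rw [hcc j0, this, mul_zero])

/-- Integer vectors whose reductions mod a prime `p` are linearly independent over `F_p`
have real images that are linearly independent over `ℝ`. -/
private lemma lift_li {p d : ℕ} (hp : p.Prime) {ι : Type*} [Fintype ι]
    {x : ι → Fin d → ℤ}
    (h : LinearIndependent (ZMod p) (fun j => (fun i => ((x j i : ZMod p))))) :
    LinearIndependent ℝ (fun j => (fun i => ((x j i : ℝ)))) := by
  rw [Fintype.linearIndependent_iff]
  intro g hg
  by_contra hne
  push_neg at hne
  obtain ⟨j0, hj0⟩ := hne
  obtain ⟨ψ, hψ⟩ : ∃ ψ : Module.Dual ℚ ℝ, ψ (g j0) ≠ 0 := by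
    by_contra hall; push_neg at hall
    exact hj0 ((Module.forall_dual_apply_eq_zero_iff ℚ (g j0)).mp hall)
  set c : ι → ℚ := fun j => ψ (g j) with hcdef
  have hrelQ : ∀ i, ∑ j, c j * (x j i : ℚ) = 0 := by
    intro i
    have h1 : ∑ j, g j * (x j i : ℝ) = 0 := by
      have := congrFun hg i
      simpa [Finset.sum_apply] using this
    have h2 : ψ (∑ j, g j * (x j i : ℝ)) = 0 := by rw [h1]; simp
    rw [map_sum] at h2
    rw [← h2]
    refine Finset.sum_congr rfl fun j _ => ?_
    have hsm : g j * (x j i : ℝ) = (x j i : ℚ) • g j := by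
      rw [Rat.smul_def]; push_cast; ring
    rw [hsm, map_smul, smul_eq_mul]; ring
  obtain ⟨b, hb⟩ := IsLocalization.exist_integer_multiples_of_finite
    (nonZeroDivisors ℤ) (S := ℚ) c
  choose e he using hb
  have hb0 : ((b : ℤ) : ℚ) ≠ 0 := by
    exact_mod_cast nonZeroDivisors.coe_ne_zero b
  have hcast : ∀ j, (e j : ℚ) = (b : ℤ) * c j := by
    intro j
    have := he j
    simpa [Algebra.smul_def, zsmul_eq_mul] using this
  have hrelZ : ∀ i, ∑ j, e j * x j i = 0 := by
    intro i
    have h3 : ((∑ j, e j * x j i : ℤ) : ℚ) = ((b : ℤ) : ℚ) * ∑ j, c j * (x j i : ℚ) := by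
      push_cast
      rw [Finset.mul_sum]
      refine Finset.sum_congr rfl fun j _ => ?_
      rw [hcast j]; push_cast; ring
    have h4 : ((∑ j, e j * x j i : ℤ) : ℚ) = 0 := by rw [h3, hrelQ i, mul_zero]
    exact_mod_cast h4
  have := int_rel_zero hp h e hrelZ j0
  have h5 : (e j0 : ℚ) = 0 := by exact_mod_cast this
  rw [hcast j0] at h5
  rcases mul_eq_zero.mp h5 with h | h
  · exact absurd h hb0
  · exact hψ h
/-- Let `p` be prime and `k ≤ d`. If `S ⊆ ℤ^d` is a finite set of integer
vectors whose reductions mod `p` are nonzero and pairwise non-proportional over `F_p`, then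
every `k`-dimensional linear subspace of `ℝ^d` contains at most `(p^k - 1)/(p - 1)` elements
of `S`. -/
theorem stmt16 (p : ℕ) (hp : p.Prime) (k d : ℕ) (hk : 0 < k) (hkd : k ≤ d)
    (S : Set (Fin d → ℤ)) (hS : S.Finite)
    (h0 : ∀ x ∈ S, (fun i => (x i : ZMod p)) ≠ (0 : Fin d → ZMod p))
    (hprop : ∀ x ∈ S, ∀ y ∈ S, x ≠ y →
      ¬ ∃ l : ZMod p, ∀ i, (x i : ZMod p) = l * (y i : ZMod p))
    (W : Submodule ℝ (Fin d → ℝ)) (hW : Module.finrank ℝ W = k) :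
    (({x ∈ S | (fun i => (x i : ℝ)) ∈ W}).ncard : ℝ) ≤
      ((p : ℝ) ^ k - 1) / ((p : ℝ) - 1) := by
  classical
  haveI : Fact p.Prime := ⟨hp⟩
  haveI : NeZero p := ⟨hp.ne_zero⟩
  set T : Set (Fin d → ℤ) := {x ∈ S | (fun i => (x i : ℝ)) ∈ W} with hTdef
  have hTfin : T.Finite := hS.subset (fun x hx => hx.1)
  set φ : (Fin d → ℤ) → (Fin d → ZMod p) := fun x i => (x i : ZMod p) with hφ
  set U : Submodule (ZMod p) (Fin d → ZMod p) := Submodule.span (ZMod p) (φ '' T) with hU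
  -- Step A : finrank U ≤ k
  have hfin : Module.finrank (ZMod p) U ≤ k := by
    obtain ⟨b, hbsub, hbspan, hbli⟩ := exists_linearIndependent (ZMod p) (φ '' T)
    have hbfin : b.Finite := (hTfin.image φ).subset hbsub
    haveI := hbfin.fintype
    have h1 : Module.finrank (ZMod p) U = b.toFinset.card := by
      rw [hU, ← hbspan]; exact finrank_span_set_eq_card hbli
    have hlift : ∀ w : b, ∃ x, x ∈ T ∧ φ x = (w : Fin d → ZMod p) := by
      intro w; obtain ⟨x, hx, hxw⟩ := hbsub w.2; exact ⟨x, hx, hxw⟩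
    choose ℓ hℓT hℓφ using hlift
    have hli : LinearIndependent (ZMod p)
        (fun w : b => (fun i => ((ℓ w i : ZMod p)))) := by
      have : (fun w : b => (fun i => ((ℓ w i : ZMod p)))) = ((↑) : b → Fin d → ZMod p) := by
        funext w; exact hℓφ w
      rw [this]; exact hbli
    have hliR := lift_li hp hli
    have hspan : Submodule.span ℝ (Set.range (fun w : b => (fun i => ((ℓ w i : ℝ))))) ≤ W := by
      rw [Submodule.span_le]
      rintro _ ⟨w, rfl⟩
      exact (hℓT w).2
    have h2 : Fintype.card b ≤ Module.finrank ℝ W := by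
      rw [← finrank_span_eq_card hliR]
      exact Submodule.finrank_mono hspan
    rw [h1, Set.toFinset_card]
    exact h2.trans (le_of_eq hW)
  -- Step B : counting
  set t : Finset (Fin d → ℤ) := hTfin.toFinset with ht
  have hmain : (p - 1) * t.card ≤ p ^ k - 1 := by
    have hcard : ((Finset.univ.erase (0 : ZMod p)) ×ˢ t).card ≤
        ((Finset.univ.filter (· ∈ U)).erase 0).card := by
      apply Finset.card_le_card_of_injOn (fun cx => cx.1 • φ cx.2)
      · rintro ⟨c, x⟩ hcx
        rw [Finset.mem_coe, Finset.mem_product] at hcx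
        obtain ⟨hc, hx⟩ := hcx
        have hc0 : c ≠ 0 := (Finset.mem_erase.mp hc).1
        have hxT : x ∈ T := hTfin.mem_toFinset.mp hx
        have hφx : φ x ∈ U := Submodule.subset_span ⟨x, hxT, rfl⟩
        have hφx0 : φ x ≠ 0 := h0 x hxT.1
        rw [Finset.mem_coe, Finset.mem_erase, Finset.mem_filter]
        exact ⟨smul_ne_zero hc0 hφx0, Finset.mem_univ _, U.smul_mem _ hφx⟩
      · rintro ⟨c, x⟩ hcx ⟨c', x'⟩ hcx' heq
        have heq' : c • φ x = c' • φ x' := heq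
        have hcx1 := Finset.mem_product.mp (Finset.mem_coe.mp hcx)
        have hcx1' := Finset.mem_product.mp (Finset.mem_coe.mp hcx')
        have hc0 : c ≠ 0 := (Finset.mem_erase.mp hcx1.1).1
        have hc0' : c' ≠ 0 := (Finset.mem_erase.mp hcx1'.1).1
        have hxT : x ∈ T := hTfin.mem_toFinset.mp hcx1.2
        have hxT' : x' ∈ T := hTfin.mem_toFinset.mp hcx1'.2
        have hxx : x = x' := by
          by_contra hne
          apply hprop x hxT.1 x' hxT'.1 hne
          refine ⟨c⁻¹ * c', fun i => ?_⟩
          have heqi : c * (x i : ZMod p) = c' * (x' i : ZMod p) := by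
            have := congrFun heq' i
            simpa [hφ] using this
          calc (x i : ZMod p) = c⁻¹ * (c * (x i : ZMod p)) := by
                rw [← mul_assoc, inv_mul_cancel₀ hc0, one_mul]
            _ = c⁻¹ * (c' * (x' i : ZMod p)) := by rw [heqi]
            _ = (c⁻¹ * c') * (x' i : ZMod p) := by ring
        subst hxx
        have hsub : (c - c') • φ x = 0 := by
          rw [sub_smul, heq', sub_self]
        have hφx0 : φ x ≠ 0 := h0 x hxT.1
        have hcc : c = c' := by
          rcases smul_eq_zero.mp hsub with h | h
          · exact sub_eq_zero.mp h
          · exact absurd h hφx0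
        rw [hcc]
    have hA : (Finset.univ.erase (0 : ZMod p)).card = p - 1 := by
      rw [Finset.card_erase_of_mem (Finset.mem_univ 0), Finset.card_univ, ZMod.card]
    have hB : ((Finset.univ.filter (· ∈ U)).erase 0).card
        = p ^ Module.finrank (ZMod p) U - 1 := by
      rw [Finset.card_erase_of_mem (by
        rw [Finset.mem_filter]; exact ⟨Finset.mem_univ _, U.zero_mem⟩)]
      congr 1
      have hcu : (Finset.univ.filter (· ∈ U)).card = Fintype.card U :=
        (Fintype.card_subtype _).symm
      rw [hcu, Module.card_eq_pow_finrank (K := ZMod p) (V := U), ZMod.card]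
    rw [Finset.card_product, hA, hB] at hcard
    have hpow : p ^ Module.finrank (ZMod p) U ≤ p ^ k :=
      Nat.pow_le_pow_right hp.pos hfin
    omega
  have hm : ({x ∈ S | (fun i => (x i : ℝ)) ∈ W}).ncard = t.card :=
    Set.ncard_eq_toFinset_card _ hTfin
  rw [hm]
  have hpR : (1 : ℝ) < p := by exact_mod_cast hp.one_lt
  rw [le_div_iff₀ (by linarith)]
  have h1p : 1 ≤ p := hp.pos
  have h1pk : 1 ≤ p ^ k := Nat.one_le_pow _ _ hp.pos
  have hcastineq : ((p : ℝ) - 1) * t.card ≤ (p : ℝ) ^ k - 1 := by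
    have := (Nat.cast_le (α := ℝ)).mpr hmain
    push_cast [Nat.cast_sub h1p, Nat.cast_sub h1pk] at this
    convert this using 2 <;> push_cast <;> ring
  rw [mul_comm]
  exact hcastineq
end
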